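/- For every T ∈ B(H), the spectral propagation of T with respect to (C₀(X), L_d) equals the classical propagation of T. Consequently, the norm closure of the set of locally compact operators of finite spectral propagation coincides with the norm closure of the set of locally compact operators of finite classical propagation (the Roe algebra C*(X)). -/

import Mathlib

/-!
Both propagations are compared through cutoffs `φ(a)` of `1`-Lipschitz functions `a`.

If `T` has classical propagation `≤ R`, `R < R'` and `θ` vanishes on `(-∞, R']`, split
`1 = u(a) + v(a)` with `v` supported in `[δ, ∞)` and `u` in `(-∞, 2δ]`: then
`χ_{(-∞,0]}(a) v(a) = 0`, and `u(a)`, `θ(a)` have supports `R' - 2δ > R` apart, so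
`χ_{(-∞,0]}(a) T θ(a) = 0` for all such `θ`, which forces `χ_{(-∞,0]}(a) T χ_{(R',∞)}(a) = 0`.

Conversely, if `K = supp k` is compact and `d(K, supp u) > r > R`, the function
`a = min (d(·, K), r)` is `1`-Lipschitz, a constant plus a `C₀` function, `0` on `K` and `r`
on `supp u`; hence `ρ(k) = ρ(k) χ_{(-∞,0]}(a)` and `ρ(u) = χ_{(R,∞)}(a) ρ(u)`, so
`ρ(k) T ρ(u) = 0`. Density of compactly supported functions in `C₀(X)` and nondegeneracy of `ρ`
remove the assumption on `k`. The gap `R < R'` disappears in the infimum.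
-/

open scoped ZeroAtInfty BoundedContinuousFunction ENNReal NNReal

noncomputable section RoePreamble

/-- Post-composition of a real bounded continuous function with the inclusion `ℝ → ℂ`. -/
def toComplexBCF {X : Type*} [TopologicalSpace X] (f : X →ᵇ ℝ) : X →ᵇ ℂ :=
  f.comp Complex.ofReal Complex.isometry_ofReal.lipschitz

variable {X : Type*} [MetricSpace X]
variable {H : Type*} [NormedAddCommGroup H] [InnerProductSpace ℂ H] [CompleteSpace H]

section Rep

/- `ρ` plays the role of the canonical extension `ρ̄` to `C_b(X)` of a representation of
`C₀(X)` on `H`; the representation itself is its restriction `g ↦ ρ g.toBCF` to `C₀(X)`. -/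
variable (ρ : (X →ᵇ ℂ) →⋆ₐ[ℂ] (H →L[ℂ] H))

/-- The restriction of `ρ` to `C₀(X)` is faithful. -/
def RepFaithful : Prop :=
  Function.Injective fun g : C₀(X, ℂ) => ρ g.toBCF

/-- The restriction of `ρ` to `C₀(X)` is nondegenerate: `ρ(C₀(X)) H` spans a dense subspace. -/
def RepNondegenerate : Prop :=
  (Submodule.span ℂ {η : H | ∃ (g : C₀(X, ℂ)) (ξ : H), η = ρ g.toBCF ξ}).topologicalClosure = ⊤

/-- The distance between two subsets of `X`, as an extended nonnegative real. -/
def setEDist (s t : Set X) : ℝ≥0∞ := ⨅ x ∈ s, EMetric.infEdist x t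

/-- `T` has (classical) propagation at most `R`: `ρ̄(f) T ρ̄(g) = 0` whenever
`d(supp f, supp g) > R`. -/
def HasClassPropLE (T : H →L[ℂ] H) (R : ℝ) : Prop :=
  ∀ f g : X →ᵇ ℂ, ENNReal.ofReal R < setEDist (tsupport ⇑f) (tsupport ⇑g) →
    ρ f * T * ρ g = 0

/-- The (classical) propagation of `T`. -/
def classPropagation (T : H →L[ℂ] H) : ℝ≥0∞ :=
  ⨅ (R : ℝ≥0) (_ : HasClassPropLE ρ T R), (R : ℝ≥0∞)

/-- `T` is locally compact: `ρ(g) T` and `T ρ(g)` are compact for every `g ∈ C₀(X)`. -/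
def LocallyCompactOp (T : H →L[ℂ] H) : Prop :=
  ∀ g : C₀(X, ℂ), IsCompactOperator ⇑(ρ g.toBCF * T) ∧ IsCompactOperator ⇑(T * ρ g.toBCF)

/-- `C` is an upper bound for the Lipschitz commutant seminorm
`L*(T) = sup {‖[T, ρ̄ f]‖ : f ∈ C_b(X) real-valued and 1-Lipschitz}`. -/
def LipCommBound (T : H →L[ℂ] H) (C : ℝ) : Prop :=
  ∀ f : X →ᵇ ℝ, LipschitzWith 1 ⇑f →
    ‖T * ρ (toComplexBCF f) - ρ (toComplexBCF f) * T‖ ≤ C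

end Rep

end RoePreamble

noncomputable section SpectralProjections

variable {H : Type*} [NormedAddCommGroup H] [InnerProductSpace ℂ H] [CompleteSpace H]

/-- The closed subspace of vectors whose spectral measure (for the self-adjoint operator `a`)
is supported in the closed set `S`. -/
def spectralSubspace (a : H →L[ℂ] H) (S : Set ℝ) : Submodule ℂ H :=
  (⨅ g : {g : ℝ → ℝ // Continuous g ∧ ∀ x ∈ S, g x = 0},
    LinearMap.ker ((cfc (g : ℝ → ℝ) a : H →L[ℂ] H) : H →ₗ[ℂ] H)).topologicalClosure

instance (a : H →L[ℂ] H) (S : Set ℝ) : CompleteSpace (spectralSubspace a S) :=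
  (Submodule.isClosed_topologicalClosure _).completeSpace_coe

/-- The spectral projection `χ_{(-∞, r]}(a)`. -/
def specProjIic (a : H →L[ℂ] H) (r : ℝ) : H →L[ℂ] H :=
  (spectralSubspace a (Set.Iic r)).subtypeL ∘L (spectralSubspace a (Set.Iic r)).orthogonalProjection

/-- The spectral projection `χ_{(r, ∞)}(a)`. -/
def specProjIoi (a : H →L[ℂ] H) (r : ℝ) : H →L[ℂ] H := 1 - specProjIic a r

end SpectralProjections

noncomputable section

variable {X : Type*} [MetricSpace X] [ProperSpace X]
variable {H : Type*} [NormedAddCommGroup H] [InnerProductSpace ℂ H] [CompleteSpace H]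
variable (ρ : (X →ᵇ ℂ) →⋆ₐ[ℂ] (H →L[ℂ] H))

/-- `T` has spectral propagation at most `R` with respect to `(C₀(X), L_d)`:
for every self-adjoint `a = g + c·1` in the unitization of `C₀(X)` with Lipschitz seminorm
`L_d(a) ≤ 1` (i.e. `g` real-valued and `1`-Lipschitz), `χ_{(−∞,0]}(a) T χ_{(R,∞)}(a) = 0`. -/
def HasSpecPropLE_Lip (T : H →L[ℂ] H) (R : ℝ) : Prop :=
  ∀ (g : C₀(X, ℝ)) (c : ℝ), LipschitzWith 1 ⇑g →
    specProjIic (ρ (toComplexBCF g.toBCF) + (c : ℂ) • 1) 0 * T *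
      specProjIoi (ρ (toComplexBCF g.toBCF) + (c : ℂ) • 1) R = 0

/-- The spectral propagation of `T` with respect to `(C₀(X), L_d)`. -/
def specPropagation_Lip (T : H →L[ℂ] H) : ℝ≥0∞ :=
  ⨅ (R : ℝ≥0) (_ : HasSpecPropLE_Lip ρ T R), (R : ℝ≥0∞)

end

section FunctionalCalculus

variable {X : Type*} [TopologicalSpace X]

-- Instance search does not find this instance for `X →ᵇ ℂ` by itself.
instance : ContinuousFunctionalCalculus ℝ (X →ᵇ ℂ) IsSelfAdjoint :=
  IsSelfAdjoint.instContinuousFunctionalCalculus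

@[simp] lemma toComplexBCF_apply (a : X →ᵇ ℝ) (x : X) : toComplexBCF a x = a x := rfl

lemma isSelfAdjoint_toComplexBCF (a : X →ᵇ ℝ) : IsSelfAdjoint (toComplexBCF a) := by
  ext x
  exact Complex.conj_ofReal (a x)

lemma cfc_toComplexBCF_apply {φ : ℝ → ℝ} (hφ : Continuous φ) (a : X →ᵇ ℝ) (x : X) :
    cfc φ (toComplexBCF a) x = φ (a x) := by
  let ev := (ContinuousMap.evalStarAlgHom ℂ ℂ x).comp
    (BoundedContinuousFunction.toContinuousMapStarₐ (α := X) (β := ℂ) ℂ)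
  have hev : Continuous ev := (BoundedContinuousFunction.lipschitz_eval_const x).continuous
  have := StarAlgHomClass.map_cfc (R := ℝ) ev φ (toComplexBCF a) hφ.continuousOn hev
    (isSelfAdjoint_toComplexBCF a) ((isSelfAdjoint_toComplexBCF a).map ev)
  rwa [show ev (toComplexBCF a) = algebraMap ℝ ℂ (a x) from rfl, cfc_algebraMap] at this

lemma tsupport_cfc_toComplexBCF_subset {φ : ℝ → ℝ} (hφ : Continuous φ) (a : X →ᵇ ℝ)
    {C : Set ℝ} (hC : IsClosed C) (hφC : ∀ t ∉ C, φ t = 0) :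
    tsupport ⇑(cfc φ (toComplexBCF a)) ⊆ a ⁻¹' C := by
  refine closure_minimal (fun x hx => ?_) (hC.preimage a.continuous)
  by_contra hxC
  simp [Function.mem_support, cfc_toComplexBCF_apply hφ, hφC _ hxC] at hx

lemma cfc_toComplexBCF_mul_eq_zero {φ : ℝ → ℝ} (hφ : Continuous φ) {a : X →ᵇ ℝ}
    {u : X →ᵇ ℂ} (h : ∀ x ∈ tsupport ⇑u, φ (a x) = 0) : cfc φ (toComplexBCF a) * u = 0 := by
  ext x
  by_cases hx : x ∈ tsupport ⇑u
  · simp [cfc_toComplexBCF_apply hφ, h x hx]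
  · simp [image_eq_zero_of_notMem_tsupport hx]

lemma mul_cfc_toComplexBCF_eq_self {φ : ℝ → ℝ} (hφ : Continuous φ) {a : X →ᵇ ℝ}
    {u : X →ᵇ ℂ} (h : ∀ x ∈ tsupport ⇑u, φ (a x) = 1) : u * cfc φ (toComplexBCF a) = u := by
  ext x
  by_cases hx : x ∈ tsupport ⇑u
  · simp [cfc_toComplexBCF_apply hφ, h x hx]
  · simp [image_eq_zero_of_notMem_tsupport hx]

lemma BoundedContinuousFunction.tsupport_star (u : X →ᵇ ℂ) : tsupport ⇑(star u) = tsupport ⇑u := by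
  simp [tsupport, Function.support]

end FunctionalCalculus

section SpectralProjections

variable {H : Type*} [NormedAddCommGroup H] [InnerProductSpace ℂ H] [CompleteSpace H]

lemma mem_spectralSubspace_iff {a : H →L[ℂ] H} {S : Set ℝ} {ξ : H} :
    ξ ∈ spectralSubspace a S ↔
      ∀ g : ℝ → ℝ, Continuous g → (∀ t ∈ S, g t = 0) → cfc g a ξ = 0 := by
  have hclosed : IsClosed ((⨅ g : {g : ℝ → ℝ // Continuous g ∧ ∀ x ∈ S, g x = 0},
      LinearMap.ker ((cfc (g : ℝ → ℝ) a : H →L[ℂ] H) : H →ₗ[ℂ] H) : Submodule ℂ H) : Set H) := by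
    rw [Submodule.coe_iInf]
    exact isClosed_iInter fun g => ContinuousLinearMap.isClosed_ker _
  rw [spectralSubspace, hclosed.submodule_topologicalClosure_eq, Submodule.mem_iInf]
  exact ⟨fun h g hg hgS => h ⟨g, hg, hgS⟩, fun h g => h g.1 g.2.1 g.2.2⟩

lemma isSelfAdjoint_specProjIic (a : H →L[ℂ] H) (r : ℝ) : IsSelfAdjoint (specProjIic a r) :=
  isSelfAdjoint_starProjection _

lemma specProjIic_mul_eq_self {a B : H →L[ℂ] H} {r : ℝ}
    (h : ∀ ξ, B ξ ∈ spectralSubspace a (Set.Iic r)) : specProjIic a r * B = B := by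
  ext ξ
  exact Submodule.starProjection_eq_self_iff.mpr (h ξ)

lemma mul_specProjIic_eq_zero {a B : H →L[ℂ] H} {r : ℝ}
    (h : ∀ ξ ∈ spectralSubspace a (Set.Iic r), B ξ = 0) : B * specProjIic a r = 0 := by
  ext ξ
  exact h _ (SetLike.coe_mem _)

/-- `B * cfc θ a = 0` puts the range of `B†` into the spectral subspace of `(-∞, r]`, whose
orthogonal complement is the range of `χ_{(r,∞)}(a)`. -/
lemma mul_specProjIoi_eq_zero {a B : H →L[ℂ] H} {r : ℝ}
    (h : ∀ θ : ℝ → ℝ, Continuous θ → (∀ t ∈ Set.Iic r, θ t = 0) → B * cfc θ a = 0) :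
    B * specProjIoi a r = 0 := by
  set U := spectralSubspace a (Set.Iic r)
  have hadj : ∀ η, star B η ∈ U := fun η => mem_spectralSubspace_iff.mpr fun θ hθ hθr => by
    have := congrArg star (h θ hθ hθr)
    rw [star_mul, (cfc_predicate θ a).star_eq, star_zero] at this
    exact congrFun (congrArg DFunLike.coe this) η
  ext ξ
  have hξ : specProjIoi a r ξ ∈ Uᗮ := Submodule.sub_starProjection_mem_orthogonal ξ
  rw [mul_apply_eq_comp, zero_apply, ← inner_self_eq_zero (𝕜 := ℂ),
    ← ContinuousLinearMap.adjoint_inner_right, ← ContinuousLinearMap.star_eq_adjoint]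
  exact Submodule.inner_left_of_mem_orthogonal (hadj _) hξ

end SpectralProjections

lemma exists_continuous_eq_zero_of_le_eq_one_of_ge {r r' : ℝ} (h : r < r') :
    ∃ σ : ℝ → ℝ, Continuous σ ∧ (∀ t ≤ r, σ t = 0) ∧ ∀ t, r' ≤ t → σ t = 1 := by
  refine ⟨fun t => Real.smoothTransition ((t - r) / (r' - r)), by fun_prop,
    fun t ht => Real.smoothTransition.zero_of_nonpos ?_,
    fun t ht => Real.smoothTransition.one_of_one_le ?_⟩
  · exact div_nonpos_of_nonpos_of_nonneg (by linarith) (by linarith)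
  · rw [one_le_div (by linarith)]
    linarith

section Representation

open scoped CStarAlgebra

variable {X : Type*} [TopologicalSpace X]
variable {H : Type*} [NormedAddCommGroup H] [InnerProductSpace ℂ H] [CompleteSpace H]
variable (ρ : (X →ᵇ ℂ) →⋆ₐ[ℂ] (H →L[ℂ] H))

lemma map_cfc_toComplexBCF {φ : ℝ → ℝ} (hφ : Continuous φ) (a : X →ᵇ ℝ) :
    ρ (cfc φ (toComplexBCF a)) = cfc φ (ρ (toComplexBCF a)) :=
  StarAlgHomClass.map_cfc ρ φ (toComplexBCF a) hφ.continuousOn (map_continuous ρ)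
    (isSelfAdjoint_toComplexBCF a) ((isSelfAdjoint_toComplexBCF a).map ρ)

lemma rho_mul_specProjIic_eq_self {a : X →ᵇ ℝ} {u : X →ᵇ ℂ} {r : ℝ}
    (hu : tsupport ⇑u ⊆ a ⁻¹' Set.Iic r) :
    ρ u * specProjIic (ρ (toComplexBCF a)) r = ρ u := by
  rw [← BoundedContinuousFunction.tsupport_star] at hu
  have h : specProjIic (ρ (toComplexBCF a)) r * ρ (star u) = ρ (star u) := by
    refine specProjIic_mul_eq_self fun ξ => mem_spectralSubspace_iff.mpr fun g hg hgr => ?_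
    rw [← map_cfc_toComplexBCF ρ hg, ← mul_apply_eq_comp, ← map_mul,
      cfc_toComplexBCF_mul_eq_zero hg fun x hx => hgr _ (hu hx),
      map_zero, zero_apply]
  simpa [← map_star, (isSelfAdjoint_specProjIic _ _).star_eq] using congrArg star h

lemma specProjIic_mul_rho_eq_zero {a : X →ᵇ ℝ} {u : X →ᵇ ℂ} {r r' : ℝ} (hr : r < r')
    (hu : tsupport ⇑u ⊆ a ⁻¹' Set.Ici r') :
    specProjIic (ρ (toComplexBCF a)) r * ρ u = 0 := by
  rw [← BoundedContinuousFunction.tsupport_star] at hu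
  obtain ⟨σ, hσ, hσ0, hσ1⟩ := exists_continuous_eq_zero_of_le_eq_one_of_ge hr
  have h : ρ (star u) * specProjIic (ρ (toComplexBCF a)) r = 0 := by
    refine mul_specProjIic_eq_zero fun ξ hξ => ?_
    have hσu : star u * cfc σ (toComplexBCF a) = star u :=
      mul_cfc_toComplexBCF_eq_self hσ fun x hx => hσ1 _ (hu hx)
    rw [← hσu, map_mul, mul_apply_eq_comp, map_cfc_toComplexBCF ρ hσ,
      mem_spectralSubspace_iff.mp hξ σ hσ hσ0, map_zero]
  simpa [← map_star, (isSelfAdjoint_specProjIic _ _).star_eq] using congrArg star h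

end Representation

section SetEDist

open Metric

variable {X : Type*} [MetricSpace X]

lemma setEDist_anti_left {s s' t : Set X} (h : s' ⊆ s) : setEDist s t ≤ setEDist s' t :=
  le_iInf₂ fun x hx => iInf₂_le x (h hx)

lemma setEDist_le_infEDist {s t : Set X} {y : X} (hy : y ∈ t) :
    setEDist s t ≤ infEDist y s :=
  le_infEDist.mpr fun x hx => (iInf₂_le x hx).trans <| by
    rw [edist_comm]
    exact infEDist_le_edist_of_mem hy

lemma ofReal_sub_le_setEDist {a : X → ℝ} (ha : LipschitzWith 1 a) {s t : Set X} {p q : ℝ}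
    (hs : s ⊆ a ⁻¹' Set.Iic p) (ht : t ⊆ a ⁻¹' Set.Ici q) :
    ENNReal.ofReal (q - p) ≤ setEDist s t :=
  le_iInf₂ fun x hx => le_infEDist.mpr fun y hy => by
    rw [edist_dist]
    refine ENNReal.ofReal_le_ofReal ?_
    have hlip : |a x - a y| ≤ dist x y := by simpa [Real.dist_eq] using ha.dist_le_mul x y
    have hp : a x ≤ p := hs hx
    have hq : q ≤ a y := ht hy
    linarith [neg_abs_le (a x - a y)]

end SetEDist

section ClassicalToSpectral

variable {X : Type*} [MetricSpace X]
variable {H : Type*} [NormedAddCommGroup H] [InnerProductSpace ℂ H] [CompleteSpace H]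
variable (ρ : (X →ᵇ ℂ) →⋆ₐ[ℂ] (H →L[ℂ] H))

lemma rho_toComplexBCF_add_const (g : X →ᵇ ℝ) (c : ℝ) :
    ρ (toComplexBCF g) + (c : ℂ) • 1 =
      ρ (toComplexBCF (g + BoundedContinuousFunction.const X c)) := by
  have : toComplexBCF (g + .const X c) = toComplexBCF g + (c : ℂ) • 1 := by
    ext x
    simp
  rw [this, map_add, map_smul, map_one]

lemma specProjIic_mul_mul_specProjIoi_eq_zero {T : H →L[ℂ] H} {R R' : ℝ} (hR : 0 ≤ R)
    (hRR' : R < R') (hT : HasClassPropLE ρ T R) {a : X →ᵇ ℝ} (ha : LipschitzWith 1 a) :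
    specProjIic (ρ (toComplexBCF a)) 0 * T * specProjIoi (ρ (toComplexBCF a)) R' = 0 := by
  refine mul_specProjIoi_eq_zero fun θ hθ hθR' => ?_
  obtain ⟨δ, hδ, hRδ⟩ : ∃ δ : ℝ, 0 < δ ∧ R < R' - 2 * δ :=
    ⟨(R' - R) / 3, by linarith, by linarith⟩
  obtain ⟨σ, hσ, hσ0, hσ1⟩ := exists_continuous_eq_zero_of_le_eq_one_of_ge
    (by linarith : δ < 2 * δ)
  have hσ' : Continuous fun t => 1 - σ t := continuous_const.sub hσ
  set u := cfc (fun t => 1 - σ t) (toComplexBCF a)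
  set v := cfc σ (toComplexBCF a)
  have huv : ρ u + ρ v = 1 := by
    rw [← map_add, ← map_one ρ]
    congr 1
    ext x
    simp [u, v, cfc_toComplexBCF_apply hσ, cfc_toComplexBCF_apply hσ']
  have hv : specProjIic (ρ (toComplexBCF a)) 0 * ρ v = 0 :=
    specProjIic_mul_rho_eq_zero ρ hδ <| tsupport_cfc_toComplexBCF_subset hσ a isClosed_Ici
      fun t ht => hσ0 t (not_le.mp ht).le
  have hdist : ENNReal.ofReal (R' - 2 * δ) ≤
      setEDist (tsupport ⇑u) (tsupport ⇑(cfc θ (toComplexBCF a))) :=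
    ofReal_sub_le_setEDist ha
      (tsupport_cfc_toComplexBCF_subset hσ' a (isClosed_Iic (a := 2 * δ))
        fun t ht => by simp [hσ1 t (not_le.mp ht).le])
      (tsupport_cfc_toComplexBCF_subset hθ a (isClosed_Ici (a := R'))
        fun t ht => hθR' t (Set.mem_Iic.mpr (not_le.mp ht).le))
  have hu : ρ u * T * ρ (cfc θ (toComplexBCF a)) = 0 :=
    hT _ _ <| (ENNReal.ofReal_lt_ofReal_iff'.mpr ⟨by linarith, by linarith⟩).trans_le hdist
  rw [← map_cfc_toComplexBCF ρ hθ]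
  set P := specProjIic (ρ (toComplexBCF a)) 0
  set w := ρ (cfc θ (toComplexBCF a))
  calc P * T * w = P * ((ρ u + ρ v) * T) * w := by rw [huv, one_mul]
    _ = P * (ρ u * T * w) + P * ρ v * T * w := by noncomm_ring
    _ = 0 := by rw [hu, hv]; simp

lemma hasSpecPropLE_Lip_of_hasClassPropLE {T : H →L[ℂ] H} {R R' : ℝ} (hR : 0 ≤ R)
    (hRR' : R < R') (hT : HasClassPropLE ρ T R) : HasSpecPropLE_Lip ρ T R' := by
  intro g c hg
  rw [rho_toComplexBCF_add_const]
  have hg' := hg.add (LipschitzWith.const c)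
  rw [add_zero] at hg'
  exact specProjIic_mul_mul_specProjIoi_eq_zero ρ hR hRR' hT hg'

end ClassicalToSpectral

theorem ZeroAtInftyContinuousMap.dense_setOf_hasCompactSupport {X E : Type*}
    [TopologicalSpace X] [RegularSpace X] [LocallyCompactSpace X]
    [NormedAddCommGroup E] [NormedSpace ℝ E] :
    Dense {f : C₀(X, E) | HasCompactSupport f} := by
  refine Metric.dense_iff.mpr fun f ε hε => ?_
  obtain ⟨K, hK, hfK⟩ : ∃ K, IsCompact K ∧ Kᶜ ⊆ {x | dist (f x) 0 < ε / 2} :=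
    Filter.mem_cocompact.mp (Metric.tendsto_nhds.mp (zero_at_infty f) (ε / 2) (by positivity))
  obtain ⟨b, hb1, -, hbc, hb01⟩ :=
    exists_continuous_one_zero_of_isCompact hK isClosed_empty (Set.disjoint_empty K)
  let g : C₀(X, E) := ⟨⟨fun x => b x • f x, by fun_prop⟩, hbc.smul_right.is_zero_at_infty⟩
  refine ⟨g, ?_, hbc.smul_right⟩
  have hfg : ∀ x, ‖f x - g x‖ ≤ ε / 2 := fun x => by
    rw [show f x - g x = (1 - b x) • f x by simp [g, sub_smul]]
    by_cases hx : x ∈ K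
    · simp [hb1 hx]
      positivity
    · rw [norm_smul, Real.norm_eq_abs, abs_of_nonneg (by linarith [(hb01 x).2])]
      have := hfK hx
      simp only [Set.mem_ofPred_eq, dist_zero_right] at this
      nlinarith [(hb01 x).1, norm_nonneg (f x)]
  rw [Metric.mem_ball, dist_comm, dist_eq_norm, ← ZeroAtInftyContinuousMap.norm_toBCF_eq_norm]
  exact ((BoundedContinuousFunction.norm_le (by positivity)).mpr hfg).trans_lt (by linarith)

section SpectralToClassical

open Metric
open scoped CStarAlgebra

variable {X : Type*} [MetricSpace X]
variable {H : Type*} [NormedAddCommGroup H] [InnerProductSpace ℂ H] [CompleteSpace H]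
variable (ρ : (X →ᵇ ℂ) →⋆ₐ[ℂ] (H →L[ℂ] H))

lemma eq_zero_of_forall_rho_mul_eq_zero (hρ : RepNondegenerate ρ) {S : H →L[ℂ] H}
    (h : ∀ q : C₀(X, ℂ), ρ q.toBCF * S = 0) : S = 0 := by
  suffices star S = 0 from star_eq_zero.mp this
  refine ContinuousLinearMap.ext_on (Submodule.dense_iff_topologicalClosure_eq_top.mpr hρ) ?_
  rintro _ ⟨q, ξ, rfl⟩
  have := congrArg star (h (star q))
  rw [star_mul, star_zero, ← map_star, show star (star q).toBCF = q.toBCF by ext; simp] at this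
  exact congrFun (congrArg DFunLike.coe this) ξ

lemma exists_zeroAtInfty_eq_min_infDist_sub [ProperSpace X] {K : Set X} (hK : IsCompact K)
    (hK' : K.Nonempty) (r : ℝ) :
    ∃ g : C₀(X, ℝ), LipschitzWith 1 g ∧ ∀ x, g x = min (infDist x K) r - r := by
  have hsupp : HasCompactSupport fun x => min (infDist x K) r - r :=
    HasCompactSupport.intro (hK.cthickening (r := r)) fun x hx => by
      rw [mem_cthickening_iff, not_le] at hx
      have : r ≤ infDist x K := (ENNReal.ofReal_le_iff_le_toReal (infEDist_ne_top hK')).mp hx.le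
      simp [this]
  refine ⟨⟨⟨_, ((continuous_infDist_pt K).min continuous_const).sub continuous_const⟩,
    hsupp.is_zero_at_infty⟩, ?_, fun x => rfl⟩
  have := ((lipschitz_infDist_pt K).min_const r).sub (LipschitzWith.const r)
  rwa [add_zero] at this

lemma rho_mul_mul_rho_eq_zero_of_hasCompactSupport [ProperSpace X] {T : H →L[ℂ] H} {R : ℝ}
    (hT : HasSpecPropLE_Lip ρ T R) {k u : X →ᵇ ℂ} (hk : HasCompactSupport k)
    (hku : ENNReal.ofReal R < setEDist (tsupport k) (tsupport u)) : ρ k * T * ρ u = 0 := by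
  rcases (tsupport ⇑k).eq_empty_or_nonempty with hK | hK
  · rw [show k = 0 from DFunLike.coe_injective (tsupport_eq_empty_iff.mp hK), map_zero,
      zero_mul, zero_mul]
  obtain ⟨r, -, hRr, hr⟩ := ENNReal.lt_iff_exists_real_btwn.mp hku
  obtain ⟨g, hg, hgK⟩ := exists_zeroAtInfty_eq_min_infDist_sub hk hK r
  set a := g.toBCF + BoundedContinuousFunction.const X r
  have ha : ∀ x, a x = min (infDist x (tsupport k)) r := fun x => by simp [a, hgK]
  have hspec := hT g r hg
  rw [rho_toComplexBCF_add_const] at hspec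
  set A := ρ (toComplexBCF a)
  have hk' : ρ k * specProjIic A 0 = ρ k :=
    rho_mul_specProjIic_eq_self ρ fun x hx => by simp [ha, infDist_zero_of_mem hx]
  have hu' : specProjIoi A R * ρ u = ρ u := by
    rw [specProjIoi, sub_mul, one_mul,
      specProjIic_mul_rho_eq_zero ρ (ENNReal.ofReal_lt_ofReal_iff'.mp hRr).1 ?_, sub_zero]
    intro y hy
    have : r ≤ infDist y (tsupport k) := (ENNReal.ofReal_le_iff_le_toReal (infEDist_ne_top hK)).mp
      (hr.le.trans (setEDist_le_infEDist hy))
    simp [ha, this]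
  calc ρ k * T * ρ u = ρ k * specProjIic A 0 * T * (specProjIoi A R * ρ u) := by rw [hk', hu']
    _ = ρ k * (specProjIic A 0 * T * specProjIoi A R) * ρ u := by noncomm_ring
    _ = 0 := by rw [hspec, mul_zero, zero_mul]

lemma hasClassPropLE_of_hasSpecPropLE_Lip [ProperSpace X] (hρ : RepNondegenerate ρ)
    {T : H →L[ℂ] H} {R : ℝ} (hT : HasSpecPropLE_Lip ρ T R) : HasClassPropLE ρ T R := by
  intro f g hfg
  have hF : Continuous fun k : C₀(X, ℂ) => ρ (k.toBCF * f) * T * ρ g :=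
    (((map_continuous ρ).comp (ZeroAtInftyContinuousMap.isometry_toBCF.continuous.mul
      continuous_const)).mul continuous_const).mul continuous_const
  have hzero : (fun k : C₀(X, ℂ) => ρ (k.toBCF * f) * T * ρ g) = fun _ => 0 :=
    hF.ext_on ZeroAtInftyContinuousMap.dense_setOf_hasCompactSupport continuous_const
      fun k hk => rho_mul_mul_rho_eq_zero_of_hasCompactSupport ρ hT hk.mul_right
        (hfg.trans_le (setEDist_anti_left tsupport_mul_subset_right))
  refine eq_zero_of_forall_rho_mul_eq_zero ρ hρ fun q => ?_
  rw [← mul_assoc, ← mul_assoc, ← map_mul]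
  exact congrFun hzero q

end SpectralToClassical

lemma biInf_coe_eq_of_imp {P Q : ℝ≥0 → Prop} (hPQ : ∀ R, P R → Q R)
    (hQP : ∀ R R', R < R' → Q R → P R') :
    ⨅ (R : ℝ≥0) (_ : P R), (R : ℝ≥0∞) = ⨅ (R : ℝ≥0) (_ : Q R), (R : ℝ≥0∞) := by
  refine le_antisymm (le_iInf₂ fun R hR => ENNReal.le_of_forall_pos_le_add fun ε hε _ => ?_)
    (le_iInf₂ fun R hR => iInf₂_le R (hPQ R hR))
  exact (iInf₂_le (R + ε) (hQP R _ (lt_add_of_pos_right R hε) hR)).trans_eq (ENNReal.coe_add _ _)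

noncomputable section

variable {X : Type*} [MetricSpace X] [ProperSpace X]
variable {H : Type*} [NormedAddCommGroup H] [InnerProductSpace ℂ H] [CompleteSpace H]
variable (ρ : (X →ᵇ ℂ) →⋆ₐ[ℂ] (H →L[ℂ] H))

theorem specPropagation_eq_classPropagation
    (hρn : RepNondegenerate ρ) :
    (∀ T : H →L[ℂ] H, specPropagation_Lip ρ T = classPropagation ρ T) ∧
    closure {T : H →L[ℂ] H | LocallyCompactOp ρ T ∧ ∃ R : ℝ, 0 ≤ R ∧ HasSpecPropLE_Lip ρ T R} =
      closure {T : H →L[ℂ] H | LocallyCompactOp ρ T ∧ ∃ R : ℝ, 0 ≤ R ∧ HasClassPropLE ρ T R} := by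
  refine ⟨fun T => biInf_coe_eq_of_imp
    (fun R => hasClassPropLE_of_hasSpecPropLE_Lip ρ hρn)
    (fun R R' hRR' => hasSpecPropLE_Lip_of_hasClassPropLE ρ R.2 hRR'), ?_⟩
  congr 1
  ext T
  refine and_congr_right fun _ => ⟨fun ⟨R, hR, hT⟩ => ?_, fun ⟨R, hR, hT⟩ => ?_⟩
  · exact ⟨R, hR, hasClassPropLE_of_hasSpecPropLE_Lip ρ hρn hT⟩
  · exact ⟨R + 1, by linarith, hasSpecPropLE_Lip_of_hasClassPropLE ρ hR (lt_add_one R) hT⟩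

end
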